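/- arXiv:2509.13446 — 8 statements merged into one kernel-verified Lean document; each statement's English description precedes it below -/
import Mathlib

section
/- Define p₀ := (D + √(D² + Π3²))/Π3², p₂ := √(2·p₀ + Π2)/Π3, p₁ := p₂·(Π3²·p₀ − D), and P := [[p₁, p₀],[p₀, p₂]]. Then P is a symmetric positive definite 2×2 real matrix satisfying the algebraic Riccati equation P·A + Aᵀ·P − Π3²·P·B·Bᵀ·P + Q = 0 with Q := [[1, 0],[0, Π2]], and the corresponding optimal LQR gain Π3²·Bᵀ·P equals the 1×2 row vector [K̂0, √(2·K̂0 + Π2·Π3²)], where K̂0 := D + √(D² + Π3²). (This is the frequency-domain solution of the LQR problem for the discretized wave equation with ℓ₂ state cost.) -/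
open Matrix Real

/-!
Writing `c = Π3²`, the Riccati equation for `P = [[p₁, p₀], [p₀, p₂]]` is three scalar equations:
`c p₀² = 2 D p₀ + 1`, `p₁ = p₂ (c p₀ - D)` and `c p₂² = 2 p₀ + Π2`. The given `p₀` is the positive
root of the first, so `c p₀ - D = √(D² + Π3²) > |D|`, and then `c (p₁ p₂ - p₀²) = 1 + Π2 (c p₀ - D)`
is positive, which together with `p₁ > 0` makes `P` positive definite.
-/

theorem Matrix.posDef_fin_two_of_pos_of_sq_lt {a b d : ℝ} (ha : 0 < a) (hdet : b ^ 2 < a * d) :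
    (!![a, b; b, d]).PosDef := by
  rw [posDef_iff_dotProduct_mulVec]
  refine ⟨by ext i j; fin_cases i <;> fin_cases j <;> rfl, fun x hx => ?_⟩
  have hform : a * (star x ⬝ᵥ !![a, b; b, d] *ᵥ x)
      = (a * x 0 + b * x 1) ^ 2 + (a * d - b ^ 2) * x 1 ^ 2 := by
    simp [dotProduct, mulVec, Fin.sum_univ_two]; ring
  refine pos_of_mul_pos_right ?_ ha.le
  rw [hform]
  by_cases h1 : x 1 = 0
  · have h0 : x 0 ≠ 0 := fun h0 => hx (by ext i; fin_cases i <;> simp [h0, h1])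
    simpa [h1] using sq_pos_of_ne_zero (mul_ne_zero ha.ne' h0)
  · have := mul_pos (sub_pos.mpr hdet) (sq_pos_of_ne_zero h1)
    positivity

theorem abs_lt_sqrt_sq_add_sq {D c : ℝ} (hc : c ≠ 0) : |D| < √(D ^ 2 + c ^ 2) :=
  (Real.lt_sqrt (abs_nonneg D)).mpr (by rw [sq_abs]; linarith [sq_pos_of_ne_zero hc])

theorem riccati_residual_fin_two (D c q p₀ p₁ p₂ : ℝ) :
    !![p₁, p₀; p₀, p₂] * !![0, 1; D, 0]
        + (!![0, 1; D, 0] : Matrix (Fin 2) (Fin 2) ℝ)ᵀ * !![p₁, p₀; p₀, p₂]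
        - c • (!![p₁, p₀; p₀, p₂] * (!![0; 1] : Matrix (Fin 2) (Fin 1) ℝ)
          * (!![0; 1] : Matrix (Fin 2) (Fin 1) ℝ)ᵀ * !![p₁, p₀; p₀, p₂])
        + !![1, 0; 0, q]
      = !![2 * D * p₀ - c * p₀ ^ 2 + 1, p₁ + D * p₂ - c * p₀ * p₂;
           p₁ + D * p₂ - c * p₀ * p₂, 2 * p₀ - c * p₂ ^ 2 + q] := by
  ext i j
  fin_cases i <;> fin_cases j <;> simp [Matrix.mul_apply, Fin.sum_univ_two, vecMul, dotProduct]
    <;> ring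

theorem riccati_gain_fin_two (c p₀ p₁ p₂ : ℝ) :
    c • ((!![0; 1] : Matrix (Fin 2) (Fin 1) ℝ)ᵀ * !![p₁, p₀; p₀, p₂]) = !![c * p₀, c * p₂] := by
  ext i j; fin_cases i; fin_cases j <;> simp [Matrix.mul_apply, Fin.sum_univ_two]

section RiccatiFinTwo

variable {D c q p₀ p₁ p₂ : ℝ}

theorem riccati_residual_fin_two_eq_zero (h₀₀ : c * p₀ ^ 2 = 2 * D * p₀ + 1)
    (h₀₁ : p₁ = p₂ * (c * p₀ - D)) (h₁₁ : c * p₂ ^ 2 = 2 * p₀ + q) :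
    !![p₁, p₀; p₀, p₂] * !![0, 1; D, 0]
        + (!![0, 1; D, 0] : Matrix (Fin 2) (Fin 2) ℝ)ᵀ * !![p₁, p₀; p₀, p₂]
        - c • (!![p₁, p₀; p₀, p₂] * (!![0; 1] : Matrix (Fin 2) (Fin 1) ℝ)
          * (!![0; 1] : Matrix (Fin 2) (Fin 1) ℝ)ᵀ * !![p₁, p₀; p₀, p₂])
        + !![1, 0; 0, q] = 0 := by
  rw [riccati_residual_fin_two,
    show 2 * D * p₀ - c * p₀ ^ 2 + 1 = 0 by linear_combination -h₀₀,
    show p₁ + D * p₂ - c * p₀ * p₂ = 0 by linear_combination h₀₁,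
    show 2 * p₀ - c * p₂ ^ 2 + q = 0 by linear_combination -h₁₁]
  exact etaExpand_eq 0

theorem sq_lt_mul_of_riccati (hc : 0 < c) (hq : 0 < q) (hD : D < c * p₀)
    (h₀₀ : c * p₀ ^ 2 = 2 * D * p₀ + 1) (h₀₁ : p₁ = p₂ * (c * p₀ - D))
    (h₁₁ : c * p₂ ^ 2 = 2 * p₀ + q) : p₀ ^ 2 < p₁ * p₂ := by
  have hdet : c * (p₁ * p₂ - p₀ ^ 2) = 1 + q * (c * p₀ - D) := by
    rw [h₀₁]; linear_combination (c * p₀ - D) * h₁₁ + h₀₀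
  have : 0 < c * (p₁ * p₂ - p₀ ^ 2) := by rw [hdet]; nlinarith
  linarith [pos_of_mul_pos_right this hc.le]

end RiccatiFinTwo

theorem lqr_riccati_solution_fin_two (D Pi2 Pi3 : ℝ) (hPi2 : 0 < Pi2) (hPi3 : 0 < Pi3) :
    let A : Matrix (Fin 2) (Fin 2) ℝ := !![0, 1; D, 0]
    let B : Matrix (Fin 2) (Fin 1) ℝ := !![0; 1]
    let Q : Matrix (Fin 2) (Fin 2) ℝ := !![1, 0; 0, Pi2]
    let p₀ : ℝ := (D + √(D ^ 2 + Pi3 ^ 2)) / Pi3 ^ 2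
    let p₂ : ℝ := √(2 * p₀ + Pi2) / Pi3
    let p₁ : ℝ := p₂ * (Pi3 ^ 2 * p₀ - D)
    let P : Matrix (Fin 2) (Fin 2) ℝ := !![p₁, p₀; p₀, p₂]
    let K₀ : ℝ := D + √(D ^ 2 + Pi3 ^ 2)
    P.IsSymm ∧ P.PosDef ∧
      P * A + Aᵀ * P - Pi3 ^ 2 • (P * B * Bᵀ * P) + Q = 0 ∧
      Pi3 ^ 2 • (Bᵀ * P) = !![K₀, √(2 * K₀ + Pi2 * Pi3 ^ 2)] := by
  intro A B Q p₀ p₂ p₁ P K₀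
  have hs : |D| < √(D ^ 2 + Pi3 ^ 2) := abs_lt_sqrt_sq_add_sq hPi3.ne'
  have hs_sq : √(D ^ 2 + Pi3 ^ 2) ^ 2 = D ^ 2 + Pi3 ^ 2 := Real.sq_sqrt (by positivity)
  have hp₀ : 0 < p₀ := div_pos (by linarith [neg_abs_le D]) (by positivity)
  have hK₀ : Pi3 ^ 2 * p₀ = K₀ := mul_div_cancel₀ _ (by positivity)
  have hD : D < Pi3 ^ 2 * p₀ := by rw [hK₀]; linarith [abs_nonneg D]
  have h₀₀ : Pi3 ^ 2 * p₀ ^ 2 = 2 * D * p₀ + 1 := by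
    simp only [p₀]; field_simp; linear_combination hs_sq
  have h₁₁ : Pi3 ^ 2 * p₂ ^ 2 = 2 * p₀ + Pi2 := by
    rw [div_pow, Real.sq_sqrt (by positivity), mul_div_cancel₀ _ (by positivity)]
  have hp₂ : 0 < p₂ := div_pos (Real.sqrt_pos.2 (by positivity)) hPi3
  have h₀₁ : p₁ = p₂ * (Pi3 ^ 2 * p₀ - D) := rfl
  clear_value p₁ p₂ p₀
  have hgain : √(2 * K₀ + Pi2 * Pi3 ^ 2) = Pi3 ^ 2 * p₂ := by
    rw [← hK₀, show 2 * (Pi3 ^ 2 * p₀) + Pi2 * Pi3 ^ 2 = (Pi3 ^ 2 * p₂) ^ 2 by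
      linear_combination -Pi3 ^ 2 * h₁₁, Real.sqrt_sq (by positivity)]
  refine ⟨IsSymm.ext fun i j => by fin_cases i <;> fin_cases j <;> rfl,
    posDef_fin_two_of_pos_of_sq_lt (h₀₁ ▸ mul_pos hp₂ (sub_pos.2 hD))
      (sq_lt_mul_of_riccati (pow_pos hPi3 2) hPi2 hD h₀₀ h₀₁ h₁₁),
    riccati_residual_fin_two_eq_zero h₀₀ h₀₁ h₁₁, ?_⟩
  rw [riccati_gain_fin_two, hK₀, hgain]

theorem lqr_riccati_solution_l2_general (n : ℕ) (k : Fin n) (Pi2 Pi3 : ℝ)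
    (hPi2 : 0 < Pi2) (hPi3 : 0 < Pi3) :
    let D : ℝ := -4 * Real.sin (Real.pi * ((k : ℕ) : ℝ) / (n : ℝ)) ^ 2
    let A : Matrix (Fin 2) (Fin 2) ℝ := !![0, 1; D, 0]
    let B : Matrix (Fin 2) (Fin 1) ℝ := !![0; 1]
    let Q : Matrix (Fin 2) (Fin 2) ℝ := !![1, 0; 0, Pi2]
    let p₀ : ℝ := (D + Real.sqrt (D ^ 2 + Pi3 ^ 2)) / Pi3 ^ 2
    let p₂ : ℝ := Real.sqrt (2 * p₀ + Pi2) / Pi3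
    let p₁ : ℝ := p₂ * (Pi3 ^ 2 * p₀ - D)
    let P : Matrix (Fin 2) (Fin 2) ℝ := !![p₁, p₀; p₀, p₂]
    let K₀ : ℝ := D + Real.sqrt (D ^ 2 + Pi3 ^ 2)
    P.IsSymm ∧ P.PosDef ∧
      P * A + Aᵀ * P - Pi3 ^ 2 • (P * B * Bᵀ * P) + Q = 0 ∧
      Pi3 ^ 2 • (Bᵀ * P) = !![K₀, Real.sqrt (2 * K₀ + Pi2 * Pi3 ^ 2)] :=
  lqr_riccati_solution_fin_two _ Pi2 Pi3 hPi2 hPi3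

/-- Frequency-domain solution of the LQR problem for the discretized wave
equation with ℓ₂ state cost: the matrix `P` built from `p₀, p₁, p₂` is the
symmetric positive definite solution of the algebraic Riccati equation, and the
optimal gain `Π3²·Bᵀ·P` is `[K̂0, √(2·K̂0 + Π2·Π3²)]` with
`K̂0 = D + √(D² + Π3²)`. -/
theorem lqr_riccati_solution_l2 (n : ℕ) (hn : 1 ≤ n) (k : Fin n) (Pi2 Pi3 : ℝ)
    (hPi2 : 0 < Pi2) (hPi3 : 0 < Pi3) :
    let D : ℝ := -4 * Real.sin (Real.pi * ((k : ℕ) : ℝ) / (n : ℝ)) ^ 2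
    let A : Matrix (Fin 2) (Fin 2) ℝ := !![0, 1; D, 0]
    let B : Matrix (Fin 2) (Fin 1) ℝ := !![0; 1]
    let Q : Matrix (Fin 2) (Fin 2) ℝ := !![1, 0; 0, Pi2]
    let p₀ : ℝ := (D + Real.sqrt (D ^ 2 + Pi3 ^ 2)) / Pi3 ^ 2
    let p₂ : ℝ := Real.sqrt (2 * p₀ + Pi2) / Pi3
    let p₁ : ℝ := p₂ * (Pi3 ^ 2 * p₀ - D)
    let P : Matrix (Fin 2) (Fin 2) ℝ := !![p₁, p₀; p₀, p₂]
    let K₀ : ℝ := D + Real.sqrt (D ^ 2 + Pi3 ^ 2)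
    P.IsSymm ∧ P.PosDef ∧
      P * A + Aᵀ * P - Pi3 ^ 2 • (P * B * Bᵀ * P) + Q = 0 ∧
      Pi3 ^ 2 • (Bᵀ * P) = !![K₀, Real.sqrt (2 * K₀ + Pi2 * Pi3 ^ 2)] :=
  lqr_riccati_solution_l2_general n k Pi2 Pi3 hPi2 hPi3
end

section
/- Define s₀ := (D + √(D² + Π4²))/Π4², s₁ := √(2·s₀)/Π4, s₂ := s₁·(Π4²·s₀ − D), and S := [[s₁, s₀],[s₀, s₂]]. Then S is a symmetric positive definite 2×2 real matrix satisfying the filter algebraic Riccati equation A·S + S·Aᵀ + B·Bᵀ − S·Cᵀ·C·S = 0, and the corresponding Kalman filter gain S·Cᵀ equals the 2×1 column vector [√(2·L̂0/Π4), L̂0]ᵀ, where L̂0 := D/Π4 + √(D²/Π4² + 1). (This is the frequency-domain solution of the Kalman filtering problem for the discretized wave equation with ℓ₂ noise cost.) -/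
/-!
Written out entrywise, the Riccati equation for `S = !![s₁, s₀; s₀, s₂]` reads
`p² s₁² = 2 s₀`, `s₂ = s₁ (p² s₀ - D)` and `p² s₀² - 2 D s₀ = 1` (with `p = Π4`).
The last one says that `s₀` is the positive root of `p² x² - 2 D x - 1`, the first
then determines `s₁ > 0`, and together they give `p² det S = 1`, so `S` is positive
definite. The gain `S Cᵀ = p (s₁, s₀)ᵀ` is the stated vector, because `p s₀ = L̂0`
and `p s₁ = √(2 s₀)`.
-/

open Matrix Real

section FinTwo

lemma isSymm_fin_two {α : Type*} (a b c : α) : !![a, b; b, c].IsSymm :=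
  IsSymm.ext_iff.2 fun i j => by fin_cases i <;> fin_cases j <;> rfl

variable {R : Type*} [Field R] [LinearOrder R] [IsStrictOrderedRing R] [StarRing R]
  [TrivialStar R]

lemma posDef_fin_two_of_pos_of_det_pos {a b c : R} (ha : 0 < a)
    (hdet : 0 < !![a, b; b, c].det) : (!![a, b; b, c] : Matrix (Fin 2) (Fin 2) R).PosDef := by
  rw [det_fin_two_of] at hdet
  refine posDef_iff_dotProduct_mulVec.2
    ⟨isHermitian_iff_isSymm.2 (isSymm_fin_two a b c), fun x hx => ?_⟩
  have hform : star x ⬝ᵥ (!![a, b; b, c] *ᵥ x) =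
      a * x 0 ^ 2 + 2 * b * x 0 * x 1 + c * x 1 ^ 2 := by
    simp only [dotProduct, Pi.star_apply, star_trivial, cons_mulVec, Fin.sum_univ_two,
      cons_val_zero, cons_val_one, cons_val_fin_one, empty_mulVec]
    ring
  rw [hform]
  -- completing the square: `a · form = (a x₀ + b x₁)² + (ac - b²) x₁²`
  refine pos_of_mul_pos_right (a := a) ?_ ha.le
  rcases eq_or_ne (x 1) 0 with h1 | h1
  · have h0 : x 0 ≠ 0 := fun h0 => hx (by ext i; fin_cases i <;> simp [h0, h1])
    simp only [h1]; nlinarith [sq_pos_of_ne_zero h0, mul_pos ha ha]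
  · nlinarith [sq_nonneg (a * x 0 + b * x 1), mul_pos hdet (sq_pos_of_ne_zero h1)]

end FinTwo

section FilterRiccati

variable {R : Type*} [CommRing R] (D p : R)

lemma filter_riccati_fin_two_eq_zero {a b c : R} (ha : p ^ 2 * a ^ 2 = 2 * b)
    (hc : c = a * (p ^ 2 * b - D)) (hb : p ^ 2 * b ^ 2 - 2 * D * b = 1) :
    let A : Matrix (Fin 2) (Fin 2) R := !![0, 1; D, 0]
    let B : Matrix (Fin 2) (Fin 1) R := !![0; 1]
    let C : Matrix (Fin 1) (Fin 2) R := !![p, 0]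
    let S : Matrix (Fin 2) (Fin 2) R := !![a, b; b, c]
    A * S + S * Aᵀ + B * Bᵀ - S * Cᵀ * C * S = 0 := by
  ext i j
  fin_cases i <;> fin_cases j <;>
    simp [mul_apply, Fin.sum_univ_two, vecHead, vecTail, vecMul, dotProduct]
  · linear_combination -ha
  · linear_combination hc
  · linear_combination hc
  · linear_combination -hb

lemma sq_mul_det_eq_one_of_filter_riccati {a b c : R} (ha : p ^ 2 * a ^ 2 = 2 * b)
    (hc : c = a * (p ^ 2 * b - D)) (hb : p ^ 2 * b ^ 2 - 2 * D * b = 1) :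
    p ^ 2 * !![a, b; b, c].det = 1 := by
  rw [det_fin_two_of]
  linear_combination (p ^ 2 * b - D) * ha + p ^ 2 * a * hc + hb

lemma mul_transpose_row_fin_two (a b c : R) :
    !![a, b; b, c] * (!![p, 0] : Matrix (Fin 1) (Fin 2) R)ᵀ = !![p * a; p * b] := by
  ext i j
  fin_cases i <;> fin_cases j <;> simp [mul_apply, Fin.sum_univ_two, mul_comm]

end FilterRiccati

section PositiveRoot

variable (D p : ℝ)

lemma neg_lt_sqrt_sq_add_sq (hp : p ≠ 0) : -D < √(D ^ 2 + p ^ 2) :=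
  (neg_le_abs D).trans_lt <| Real.lt_sqrt (abs_nonneg D) |>.2 <| by
    rw [sq_abs]; linarith [sq_pos_of_ne_zero hp]

lemma add_sqrt_sq_add_sq_div_sq_pos (hp : p ≠ 0) : 0 < (D + √(D ^ 2 + p ^ 2)) / p ^ 2 :=
  div_pos (by linarith [neg_lt_sqrt_sq_add_sq D p hp]) (by positivity)

lemma add_sqrt_sq_add_sq_div_sq_isRoot (hp : p ≠ 0) :
    p ^ 2 * ((D + √(D ^ 2 + p ^ 2)) / p ^ 2) ^ 2
      - 2 * D * ((D + √(D ^ 2 + p ^ 2)) / p ^ 2) = 1 := by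
  have hsqrt : √(D ^ 2 + p ^ 2) ^ 2 = D ^ 2 + p ^ 2 := sq_sqrt (by positivity)
  field_simp
  linear_combination hsqrt

lemma div_add_sqrt_div_sq_add_one_eq (hp : 0 < p) :
    D / p + √(D ^ 2 / p ^ 2 + 1) = p * ((D + √(D ^ 2 + p ^ 2)) / p ^ 2) := by
  have hrad : D ^ 2 / p ^ 2 + 1 = (D ^ 2 + p ^ 2) / p ^ 2 := by field_simp
  rw [hrad, sqrt_div' _ (sq_nonneg p), sqrt_sq hp.le]
  field_simp

end PositiveRoot

theorem kf_riccati_solution_l2_general (n : ℕ) (k : Fin n) (Pi4 : ℝ)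
    (hPi4 : 0 < Pi4) :
    let D : ℝ := -4 * Real.sin (Real.pi * ((k : ℕ) : ℝ) / (n : ℝ)) ^ 2
    let A : Matrix (Fin 2) (Fin 2) ℝ := !![0, 1; D, 0]
    let B : Matrix (Fin 2) (Fin 1) ℝ := !![0; 1]
    let C : Matrix (Fin 1) (Fin 2) ℝ := !![Pi4, 0]
    let s₀ : ℝ := (D + Real.sqrt (D ^ 2 + Pi4 ^ 2)) / Pi4 ^ 2
    let s₁ : ℝ := Real.sqrt (2 * s₀) / Pi4
    let s₂ : ℝ := s₁ * (Pi4 ^ 2 * s₀ - D)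
    let S : Matrix (Fin 2) (Fin 2) ℝ := !![s₁, s₀; s₀, s₂]
    let L₀ : ℝ := D / Pi4 + Real.sqrt (D ^ 2 / Pi4 ^ 2 + 1)
    S.IsSymm ∧ S.PosDef ∧
      A * S + S * Aᵀ + B * Bᵀ - S * Cᵀ * C * S = 0 ∧
      S * Cᵀ = !![Real.sqrt (2 * L₀ / Pi4); L₀] := by
  intro D A B C s₀ s₁ s₂ S L₀
  have hs₀ : 0 < s₀ := add_sqrt_sq_add_sq_div_sq_pos D Pi4 hPi4.ne'
  have hroot : Pi4 ^ 2 * s₀ ^ 2 - 2 * D * s₀ = 1 :=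
    add_sqrt_sq_add_sq_div_sq_isRoot D Pi4 hPi4.ne'
  have hs₁ : 0 < s₁ := div_pos (sqrt_pos.2 (by positivity)) hPi4
  have hgain₁ : Pi4 * s₁ = √(2 * s₀) := mul_div_cancel₀ _ hPi4.ne'
  have hs₁sq : Pi4 ^ 2 * s₁ ^ 2 = 2 * s₀ := by
    rw [← mul_pow, hgain₁, sq_sqrt (by positivity)]
  have hgain₀ : Pi4 * s₀ = L₀ := (div_add_sqrt_div_sq_add_one_eq D Pi4 hPi4).symm
  have hdet := sq_mul_det_eq_one_of_filter_riccati D Pi4 hs₁sq rfl hroot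
  refine ⟨isSymm_fin_two s₁ s₀ s₂,
    posDef_fin_two_of_pos_of_det_pos hs₁
      (pos_of_mul_pos_right (hdet ▸ one_pos) (sq_nonneg Pi4)),
    filter_riccati_fin_two_eq_zero D Pi4 hs₁sq rfl hroot, ?_⟩
  have hratio : 2 * L₀ / Pi4 = 2 * s₀ := by rw [← hgain₀]; field_simp
  rw [mul_transpose_row_fin_two, hratio, hgain₁, hgain₀]

/-- Frequency-domain solution of the Kalman filtering problem for the
discretized wave equation with ℓ₂ noise cost: the matrix `S` built from
`s₀, s₁, s₂` is the symmetric positive definite solution of the filter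
algebraic Riccati equation, and the Kalman gain `S·Cᵀ` is
`[√(2·L̂0/Π4), L̂0]ᵀ` with `L̂0 = D/Π4 + √(D²/Π4² + 1)`. -/
theorem kf_riccati_solution_l2 (n : ℕ) (hn : 1 ≤ n) (k : Fin n) (Pi4 : ℝ)
    (hPi4 : 0 < Pi4) :
    let D : ℝ := -4 * Real.sin (Real.pi * ((k : ℕ) : ℝ) / (n : ℝ)) ^ 2
    let A : Matrix (Fin 2) (Fin 2) ℝ := !![0, 1; D, 0]
    let B : Matrix (Fin 2) (Fin 1) ℝ := !![0; 1]
    let C : Matrix (Fin 1) (Fin 2) ℝ := !![Pi4, 0]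
    let s₀ : ℝ := (D + Real.sqrt (D ^ 2 + Pi4 ^ 2)) / Pi4 ^ 2
    let s₁ : ℝ := Real.sqrt (2 * s₀) / Pi4
    let s₂ : ℝ := s₁ * (Pi4 ^ 2 * s₀ - D)
    let S : Matrix (Fin 2) (Fin 2) ℝ := !![s₁, s₀; s₀, s₂]
    let L₀ : ℝ := D / Pi4 + Real.sqrt (D ^ 2 / Pi4 ^ 2 + 1)
    S.IsSymm ∧ S.PosDef ∧
      A * S + S * Aᵀ + B * Bᵀ - S * Cᵀ * C * S = 0 ∧
      S * Cᵀ = !![Real.sqrt (2 * L₀ / Pi4); L₀] :=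
  kf_riccati_solution_l2_general n k Pi4 hPi4
end

section
/- Define K̂0 := D + √(D² + Π3²·(1 − Π1·D)), p₀ := K̂0/Π3², p₂ := √(2·p₀ + Π2)/Π3, p₁ := p₂·(K̂0 − D), and P := [[p₁, p₀],[p₀, p₂]]. Then P is a symmetric positive definite 2×2 real matrix satisfying the LQR algebraic Riccati equation P·A + Aᵀ·P − Π3²·P·B·Bᵀ·P + Q = 0, and the corresponding optimal LQR gain Π3²·Bᵀ·P equals the 1×2 row vector [K̂0, √(2·K̂0 + Π2·Π3²)]. (This is the frequency-domain solution of the PDE-informed LQR problem with Sobolev-type state cost of weight Π1.) -/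
open Matrix Real

/-!
For the companion pair `A = !![0, 1; D, 0]`, `B = !![0; 1]` and a symmetric
`P = !![p₁, p₀; p₀, p₂]`, the Riccati residual is the symmetric matrix with entries
`2 D p₀ - s p₀² + c`, `p₁ + D p₂ - s p₀ p₂` and `2 p₀ - s p₂² + q` (`s = Π3²`, `Q = diag(c, q)`).
The first is a quadratic in `K₀ = s p₀` whose positive root is `D + √(D² + s c)`; the other two
then fix `p₂ = √(2 p₀ + q) / Π3` and `p₁ = p₂ (K₀ - D)`. Positive definiteness follows from
`p₁ > 0` and `s² det P = s c + s q (K₀ - D) > 0`.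
-/

namespace Matrix

theorem posDef_of_fin_two {a b d : ℝ} (ha : 0 < a) (hdet : 0 < a * d - b ^ 2) :
    (!![a, b; b, d] : Matrix (Fin 2) (Fin 2) ℝ).PosDef := by
  refine posDef_iff_dotProduct_mulVec.mpr ⟨?_, fun v hv => ?_⟩
  · rw [isHermitian_iff_isSymm]
    exact IsSymm.ext fun i j => by fin_cases i <;> fin_cases j <;> rfl
  · simp only [star_trivial, dotProduct, mulVec, Fin.sum_univ_two, cons_val_zero, cons_val_one,
      of_apply, cons_val', empty_val', cons_val_fin_one]
    have hsq : a * (v 0 * (a * v 0 + b * v 1) + v 1 * (b * v 0 + d * v 1)) =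
        (a * v 0 + b * v 1) ^ 2 + (a * d - b ^ 2) * v 1 ^ 2 := by ring
    refine pos_of_mul_pos_right (hsq ▸ ?_) ha.le
    by_cases hv1 : v 1 = 0
    · have hv0 : v 0 ≠ 0 := fun hv0 => hv (funext fun i => by fin_cases i <;> assumption)
      simp only [hv1, mul_zero, add_zero, ne_eq, OfNat.ofNat_ne_zero, not_false_eq_true,
        zero_pow]
      positivity
    · positivity

variable {R : Type*} [CommRing R]

theorem companion_riccati_residual (d s c q p₀ p₁ p₂ : R) :
    !![p₁, p₀; p₀, p₂] * !![0, 1; d, 0] + !![0, 1; d, 0]ᵀ * !![p₁, p₀; p₀, p₂]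
        - s • (!![p₁, p₀; p₀, p₂] * (!![0; 1] : Matrix (Fin 2) (Fin 1) R)
          * (!![0; 1] : Matrix (Fin 2) (Fin 1) R)ᵀ * !![p₁, p₀; p₀, p₂])
        + !![c, 0; 0, q] =
      !![2 * d * p₀ - s * p₀ ^ 2 + c, p₁ + d * p₂ - s * p₀ * p₂;
        p₁ + d * p₂ - s * p₀ * p₂, 2 * p₀ - s * p₂ ^ 2 + q] := by
  ext i j
  fin_cases i <;> fin_cases j <;>
    simp [Matrix.mul_apply, Fin.sum_univ_succ, vecMul, dotProduct] <;> ring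

theorem companion_riccati_gain (s p₀ p₁ p₂ : R) :
    s • ((!![0; 1] : Matrix (Fin 2) (Fin 1) R)ᵀ * !![p₁, p₀; p₀, p₂]) = !![s * p₀, s * p₂] := by
  ext i j
  fin_cases j <;> simp [Matrix.mul_apply, Fin.sum_univ_two]

end Matrix

theorem abs_lt_sqrt_sq_add (D : ℝ) {x : ℝ} (hx : 0 < x) : |D| < √(D ^ 2 + x) :=
  (lt_sqrt (abs_nonneg D)).2 (by rw [sq_abs]; linarith)

theorem add_sqrt_sq_add_pos (D : ℝ) {x : ℝ} (hx : 0 < x) : 0 < D + √(D ^ 2 + x) := by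
  linarith [abs_lt_sqrt_sq_add D hx, neg_abs_le D]

section CompanionRiccati

variable {s c q D K p₀ p₁ p₂ : ℝ}

theorem companion_riccati_eq_zero (hs : s ≠ 0) (h₀ : s * p₀ = K)
    (hK : (K - D) ^ 2 = D ^ 2 + s * c) (h₁ : p₁ = p₂ * (K - D)) (h₂ : s * p₂ ^ 2 = 2 * p₀ + q) :
    !![p₁, p₀; p₀, p₂] * !![0, 1; D, 0] + !![0, 1; D, 0]ᵀ * !![p₁, p₀; p₀, p₂]
        - s • (!![p₁, p₀; p₀, p₂] * (!![0; 1] : Matrix (Fin 2) (Fin 1) ℝ)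
          * (!![0; 1] : Matrix (Fin 2) (Fin 1) ℝ)ᵀ * !![p₁, p₀; p₀, p₂])
        + !![c, 0; 0, q] = 0 := by
  have e₀ : 2 * D * p₀ - s * p₀ ^ 2 + c = 0 :=
    mul_left_cancel₀ hs (by linear_combination (2 * D - K - s * p₀) * h₀ - hK)
  have e₁ : p₁ + D * p₂ - s * p₀ * p₂ = 0 := by linear_combination h₁ - p₂ * h₀
  have e₂ : 2 * p₀ - s * p₂ ^ 2 + q = 0 := by linear_combination -h₂
  rw [Matrix.companion_riccati_residual, e₀, e₁, e₂]
  exact (eta_fin_two 0).symm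

theorem companion_riccati_posDef (hs : 0 < s) (hc : 0 < c) (hq : 0 ≤ q) (hp₂ : 0 < p₂)
    (hKD : 0 < K - D) (h₀ : s * p₀ = K) (hK : (K - D) ^ 2 = D ^ 2 + s * c)
    (h₁ : p₁ = p₂ * (K - D)) (h₂ : s * p₂ ^ 2 = 2 * p₀ + q) :
    (!![p₁, p₀; p₀, p₂] : Matrix (Fin 2) (Fin 2) ℝ).PosDef := by
  refine Matrix.posDef_of_fin_two (h₁ ▸ mul_pos hp₂ hKD) (pos_of_mul_pos_right ?_ (sq_nonneg s))
  have hdet : s ^ 2 * (p₁ * p₂ - p₀ ^ 2) = s * c + s * q * (K - D) := by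
    linear_combination s ^ 2 * p₂ * h₁ + s * (K - D) * h₂ + (2 * (K - D) - s * p₀ - K) * h₀ + hK
  rw [hdet]
  positivity

end CompanionRiccati

theorem lqr_riccati_solution_sobolev_general (n : ℕ) (k : Fin n)
    (Pi1 Pi2 Pi3 : ℝ) (hPi1 : 0 ≤ Pi1) (hPi2 : 0 < Pi2) (hPi3 : 0 < Pi3) :
    let D : ℝ := -4 * Real.sin (Real.pi * ((k : ℕ) : ℝ) / (n : ℝ)) ^ 2
    let A : Matrix (Fin 2) (Fin 2) ℝ := !![0, 1; D, 0]
    let B : Matrix (Fin 2) (Fin 1) ℝ := !![0; 1]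
    let Q : Matrix (Fin 2) (Fin 2) ℝ := !![1 - Pi1 * D, 0; 0, Pi2]
    let K₀ : ℝ := D + Real.sqrt (D ^ 2 + Pi3 ^ 2 * (1 - Pi1 * D))
    let p₀ : ℝ := K₀ / Pi3 ^ 2
    let p₂ : ℝ := Real.sqrt (2 * p₀ + Pi2) / Pi3
    let p₁ : ℝ := p₂ * (K₀ - D)
    let P : Matrix (Fin 2) (Fin 2) ℝ := !![p₁, p₀; p₀, p₂]
    P.IsSymm ∧ P.PosDef ∧
      P * A + Aᵀ * P - Pi3 ^ 2 • (P * B * Bᵀ * P) + Q = 0 ∧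
      Pi3 ^ 2 • (Bᵀ * P) = !![K₀, Real.sqrt (2 * K₀ + Pi2 * Pi3 ^ 2)] := by
  intro D A B Q K₀ p₀ p₂ p₁ P
  have hD : D ≤ 0 := mul_nonpos_of_nonpos_of_nonneg (by norm_num) (sq_nonneg _)
  have hc : 0 < 1 - Pi1 * D := by nlinarith
  have hs : 0 < Pi3 ^ 2 := by positivity
  have hdisc : 0 < D ^ 2 + Pi3 ^ 2 * (1 - Pi1 * D) := by positivity
  have hKD : K₀ - D = √(D ^ 2 + Pi3 ^ 2 * (1 - Pi1 * D)) := add_sub_cancel_left _ _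
  have hK : (K₀ - D) ^ 2 = D ^ 2 + Pi3 ^ 2 * (1 - Pi1 * D) := hKD ▸ sq_sqrt hdisc.le
  have h₀ : Pi3 ^ 2 * p₀ = K₀ := mul_div_cancel₀ _ hs.ne'
  have hp₀ : 0 < p₀ := div_pos (add_sqrt_sq_add_pos D (mul_pos hs hc)) hs
  have h₂ : Pi3 ^ 2 * p₂ ^ 2 = 2 * p₀ + Pi2 := by
    rw [div_pow, sq_sqrt (by positivity), mul_div_cancel₀ _ hs.ne']
  have hgain : Pi3 ^ 2 * p₂ = √(2 * K₀ + Pi2 * Pi3 ^ 2) := by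
    rw [← h₀, show 2 * (Pi3 ^ 2 * p₀) + Pi2 * Pi3 ^ 2 = Pi3 ^ 2 * (2 * p₀ + Pi2) by ring,
      sqrt_mul hs.le, sqrt_sq hPi3.le]
    simp only [p₂]
    field_simp
  have hP : P.PosDef := companion_riccati_posDef hs hc hPi2.le (by positivity)
    (hKD ▸ sqrt_pos.2 hdisc) h₀ hK rfl h₂
  exact ⟨isHermitian_iff_isSymm.1 hP.isHermitian, hP,
    companion_riccati_eq_zero hs.ne' h₀ hK rfl h₂,
    by rw [Matrix.companion_riccati_gain, h₀, hgain]⟩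

/-- Frequency-domain solution of the PDE-informed LQR problem with Sobolev-type
state cost of weight `Π1`: the matrix `P` built from `p₀, p₁, p₂` is the
symmetric positive definite solution of the LQR algebraic Riccati equation, and
the optimal gain `Π3²·Bᵀ·P` is `[K̂0, √(2·K̂0 + Π2·Π3²)]` with
`K̂0 = D + √(D² + Π3²·(1 − Π1·D))`. -/
theorem lqr_riccati_solution_sobolev (n : ℕ) (hn : 1 ≤ n) (k : Fin n)
    (Pi1 Pi2 Pi3 : ℝ) (hPi1 : 0 ≤ Pi1) (hPi2 : 0 < Pi2) (hPi3 : 0 < Pi3) :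
    let D : ℝ := -4 * Real.sin (Real.pi * ((k : ℕ) : ℝ) / (n : ℝ)) ^ 2
    let A : Matrix (Fin 2) (Fin 2) ℝ := !![0, 1; D, 0]
    let B : Matrix (Fin 2) (Fin 1) ℝ := !![0; 1]
    let Q : Matrix (Fin 2) (Fin 2) ℝ := !![1 - Pi1 * D, 0; 0, Pi2]
    let K₀ : ℝ := D + Real.sqrt (D ^ 2 + Pi3 ^ 2 * (1 - Pi1 * D))
    let p₀ : ℝ := K₀ / Pi3 ^ 2
    let p₂ : ℝ := Real.sqrt (2 * p₀ + Pi2) / Pi3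
    let p₁ : ℝ := p₂ * (K₀ - D)
    let P : Matrix (Fin 2) (Fin 2) ℝ := !![p₁, p₀; p₀, p₂]
    P.IsSymm ∧ P.PosDef ∧
      P * A + Aᵀ * P - Pi3 ^ 2 • (P * B * Bᵀ * P) + Q = 0 ∧
      Pi3 ^ 2 • (Bᵀ * P) = !![K₀, Real.sqrt (2 * K₀ + Pi2 * Pi3 ^ 2)] :=
  lqr_riccati_solution_sobolev_general n k Pi1 Pi2 Pi3 hPi1 hPi2 hPi3
end

section
/- Define K̂0 := D + √(D² + Π3²·(1 − Π1·D)) and K̂2 := √(2·K̂0 + Π2·Π3²). Then the closed-loop matrix A − B·[K̂0, K̂2] = [[0, 1],[D − K̂0, −K̂2]] is Hurwitz: every eigenvalue λ ∈ ℂ of this 2×2 real matrix satisfies Re λ < 0. -/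
/-!
The closed-loop matrix is a real `2 × 2` matrix with trace `-K̂2` and determinant `K̂0 - D`, so by
the Routh–Hurwitz criterion for monic real quadratics it suffices that `K̂0 > 0` (then `K̂2 > 0`
too, and `K̂0 - D > 0` as `D ≤ 0`). This holds because `√(D² + Π3²(1 - Π1 D)) > √(D²) = -D`.
-/

open Matrix Polynomial

theorem Complex.re_neg_of_sq_add_mul_add_eq_zero {b c : ℝ} (hb : 0 < b) (hc : 0 < c) {z : ℂ}
    (hz : z ^ 2 + b * z + c = 0) : z.re < 0 := by
  have him : z.im * (2 * z.re + b) = 0 := by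
    have := congrArg Complex.im hz
    simp only [sq, add_im, mul_im, ofReal_re, ofReal_im, zero_im] at this
    linarith
  have hre : z.re ^ 2 - z.im ^ 2 + b * z.re + c = 0 := by
    have := congrArg Complex.re hz
    simp only [sq, add_re, mul_re, ofReal_re, ofReal_im, zero_re] at this
    linarith
  by_contra! hnonneg
  have hreal : z.im = 0 :=
    (mul_eq_zero.mp him).resolve_right (by linarith)
  rw [hreal] at hre
  nlinarith [mul_nonneg hnonneg hb.le]

theorem Matrix.re_neg_of_charpoly_eval_eq_zero_of_trace_neg_of_det_pos
    {M : Matrix (Fin 2) (Fin 2) ℝ} (htr : M.trace < 0) (hdet : 0 < M.det) {μ : ℂ}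
    (hμ : (M.map (algebraMap ℝ ℂ)).charpoly.eval μ = 0) : μ.re < 0 := by
  refine Complex.re_neg_of_sq_add_mul_add_eq_zero (neg_pos.mpr htr) hdet ?_
  rw [charpoly_map, charpoly_fin_two] at hμ
  simp only [Polynomial.map_add, Polynomial.map_sub, Polynomial.map_pow, Polynomial.map_mul,
    map_X, map_C, eval_add, eval_sub, eval_pow, eval_mul, eval_X, eval_C] at hμ
  push_cast
  linear_combination hμ

theorem lqr_gain_pos {D Pi1 Pi3 : ℝ} (hD : D ≤ 0) (hPi1 : 0 ≤ Pi1) (hPi3 : Pi3 ≠ 0) :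
    0 < D + Real.sqrt (D ^ 2 + Pi3 ^ 2 * (1 - Pi1 * D)) := by
  have hdamp : 0 < 1 - Pi1 * D := by linarith [mul_nonpos_of_nonneg_of_nonpos hPi1 hD]
  have hlt : Real.sqrt (D ^ 2) < Real.sqrt (D ^ 2 + Pi3 ^ 2 * (1 - Pi1 * D)) :=
    Real.sqrt_lt_sqrt (sq_nonneg D) (lt_add_of_pos_right _ (mul_pos (sq_pos_of_ne_zero hPi3) hdamp))
  rw [Real.sqrt_sq_eq_abs, abs_of_nonpos hD] at hlt
  linarith

theorem lqr_closed_loop_hurwitz_general (n : ℕ) (k : Fin n)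
    (Pi1 Pi2 Pi3 : ℝ) (hPi1 : 0 ≤ Pi1) (hPi2 : 0 < Pi2) (hPi3 : 0 < Pi3) :
    let D : ℝ := -4 * Real.sin (Real.pi * ((k : ℕ) : ℝ) / (n : ℝ)) ^ 2
    let A : Matrix (Fin 2) (Fin 2) ℝ := !![0, 1; D, 0]
    let B : Matrix (Fin 2) (Fin 1) ℝ := !![0; 1]
    let K₀ : ℝ := D + Real.sqrt (D ^ 2 + Pi3 ^ 2 * (1 - Pi1 * D))
    let K₂ : ℝ := Real.sqrt (2 * K₀ + Pi2 * Pi3 ^ 2)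
    A - B * !![K₀, K₂] = !![0, 1; D - K₀, -K₂] ∧
      ∀ μ : ℂ, (((A - B * !![K₀, K₂]).map (algebraMap ℝ ℂ)).charpoly.eval μ = 0) →
        μ.re < 0 := by
  intro D A B K₀ K₂
  have hD : D ≤ 0 := mul_nonpos_of_nonpos_of_nonneg (by norm_num) (sq_nonneg _)
  have hK₀ : 0 < K₀ := lqr_gain_pos hD hPi1 hPi3.ne'
  have hK₂ : 0 < K₂ := Real.sqrt_pos.mpr (by positivity)
  have hclosed : A - B * !![K₀, K₂] = !![0, 1; D - K₀, -K₂] := by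
    ext i j
    fin_cases i <;> fin_cases j <;> simp [A, B]
  refine ⟨hclosed, fun μ hμ => ?_⟩
  rw [hclosed] at hμ
  refine Matrix.re_neg_of_charpoly_eval_eq_zero_of_trace_neg_of_det_pos ?_ ?_ hμ
  · rw [trace_fin_two_of]; linarith
  · rw [det_fin_two_of]; linarith

/-- The closed-loop matrix `A − B·[K̂0, K̂2] = [[0, 1],[D − K̂0, −K̂2]]` of the
frequency-domain LQR problem for the discretized wave equation is Hurwitz:
every complex eigenvalue has strictly negative real part. -/
theorem lqr_closed_loop_hurwitz (n : ℕ) (hn : 1 ≤ n) (k : Fin n)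
    (Pi1 Pi2 Pi3 : ℝ) (hPi1 : 0 ≤ Pi1) (hPi2 : 0 < Pi2) (hPi3 : 0 < Pi3) :
    let D : ℝ := -4 * Real.sin (Real.pi * ((k : ℕ) : ℝ) / (n : ℝ)) ^ 2
    let A : Matrix (Fin 2) (Fin 2) ℝ := !![0, 1; D, 0]
    let B : Matrix (Fin 2) (Fin 1) ℝ := !![0; 1]
    let K₀ : ℝ := D + Real.sqrt (D ^ 2 + Pi3 ^ 2 * (1 - Pi1 * D))
    let K₂ : ℝ := Real.sqrt (2 * K₀ + Pi2 * Pi3 ^ 2)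
    A - B * !![K₀, K₂] = !![0, 1; D - K₀, -K₂] ∧
      ∀ μ : ℂ, (((A - B * !![K₀, K₂]).map (algebraMap ℝ ℂ)).charpoly.eval μ = 0) →
        μ.re < 0 :=
  lqr_closed_loop_hurwitz_general n k Pi1 Pi2 Pi3 hPi1 hPi2 hPi3
end

section
/- Let n ≥ 1, Π1 ≥ 0, Π2 > 0, Π3 > 0, and suppose Π1 = 2/Π3. Then the Fourier-domain LQR gain is constant across all spatial frequencies: for every k ∈ {0,…,n−1}, K̂0(k) := D_k + √(D_k² + Π3²·(1 − Π1·D_k)) = Π3, and hence the full gain [K̂0(k), √(2·K̂0(k) + Π2·Π3²)] equals [Π3, √(2·Π3 + Π2·Π3²)] for every k. -/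
/-- The `k`-th eigenvalue `−4·sin²(πk/n)` of the discrete periodic Laplacian. -/
noncomputable def Dlap (n k : ℕ) : ℝ := -4 * Real.sin (Real.pi * k / n) ^ 2

/-- The scalar Fourier-domain LQR gain at spatial frequency `k` for the
PDE-informed LQR problem with Sobolev weight `Π1` and control weight `1/Π3²`. -/
noncomputable def Khat0 (n : ℕ) (Pi1 Pi3 : ℝ) (k : ℕ) : ℝ :=
  Dlap n k + Real.sqrt ((Dlap n k) ^ 2 + Pi3 ^ 2 * (1 - Pi1 * Dlap n k))

/-! With `Π1 = 2/Π3` the discriminant `D² + Π3²(1 − Π1·D)` is the perfect square `(Π3 − D)²`,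
and since every Laplacian eigenvalue satisfies `D ≤ 0 < Π3` its square root is `Π3 − D`, so the
gain `D + (Π3 − D) = Π3` no longer depends on the frequency. -/

theorem Dlap_nonpos (n k : ℕ) : Dlap n k ≤ 0 := by
  unfold Dlap
  nlinarith [sq_nonneg (Real.sin (Real.pi * k / n))]

theorem sq_add_sq_mul_one_sub_two_div_mul {c : ℝ} (hc : c ≠ 0) (D : ℝ) :
    D ^ 2 + c ^ 2 * (1 - 2 / c * D) = (c - D) ^ 2 := by
  field_simp
  ring

theorem add_sqrt_sq_add_sq_mul_one_sub_two_div_mul {c D : ℝ} (hc : c ≠ 0) (hD : D ≤ c) :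
    D + Real.sqrt (D ^ 2 + c ^ 2 * (1 - 2 / c * D)) = c := by
  rw [sq_add_sq_mul_one_sub_two_div_mul hc, Real.sqrt_sq (sub_nonneg.mpr hD)]
  ring

theorem Khat0_two_div_eq (n : ℕ) {Pi3 : ℝ} (hPi3 : 0 < Pi3) (k : ℕ) :
    Khat0 n (2 / Pi3) Pi3 k = Pi3 :=
  add_sqrt_sq_add_sq_mul_one_sub_two_div_mul hPi3.ne' ((Dlap_nonpos n k).trans hPi3.le)

theorem lqr_gain_decentralized_general (n : ℕ) (Pi1 Pi2 Pi3 : ℝ)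
    (hPi3 : 0 < Pi3) (h : Pi1 = 2 / Pi3) :
    ∀ k : ℕ, k < n →
      Khat0 n Pi1 Pi3 k = Pi3 ∧
      ![Khat0 n Pi1 Pi3 k, Real.sqrt (2 * Khat0 n Pi1 Pi3 k + Pi2 * Pi3 ^ 2)] =
        ![Pi3, Real.sqrt (2 * Pi3 + Pi2 * Pi3 ^ 2)] := by
  intro k _
  subst h
  have hK := Khat0_two_div_eq n hPi3 k
  exact ⟨hK, by rw [hK]⟩

/-- When `Π1 = 2/Π3`, the Fourier-domain LQR gain is constant across all
spatial frequencies: `K̂0(k) = Π3` and the full gain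
`[K̂0(k), √(2·K̂0(k) + Π2·Π3²)]` equals `[Π3, √(2·Π3 + Π2·Π3²)]` for every
`k ∈ {0,…,n−1}`, i.e. the LQR feedback is completely decentralized. -/
theorem lqr_gain_decentralized (n : ℕ) (hn : 1 ≤ n) (Pi1 Pi2 Pi3 : ℝ)
    (hPi1 : 0 ≤ Pi1) (hPi2 : 0 < Pi2) (hPi3 : 0 < Pi3) (h : Pi1 = 2 / Pi3) :
    ∀ k : ℕ, k < n →
      Khat0 n Pi1 Pi3 k = Pi3 ∧
      ![Khat0 n Pi1 Pi3 k, Real.sqrt (2 * Khat0 n Pi1 Pi3 k + Pi2 * Pi3 ^ 2)] =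
        ![Pi3, Real.sqrt (2 * Pi3 + Pi2 * Pi3 ^ 2)] :=
  lqr_gain_decentralized_general n Pi1 Pi2 Pi3 hPi3 h
end

section
/- Let n ≥ 1, Π1 ≥ 0, Π4 > 0, and suppose Π1 = 2/Π4. Then the Fourier-domain Kalman filter gain is constant across all spatial frequencies: for every k ∈ {0,…,n−1}, L̂0(k) := D_k/Π4 + √(D_k²/Π4² − Π1·D_k + 1) = 1, and hence the full gain [√(2·L̂0(k)/Π4), L̂0(k)]ᵀ equals [√(2/Π4), 1]ᵀ for every k. -/
/-- The scalar Fourier-domain Kalman filter gain at spatial frequency `k` for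
the PDE-informed estimation problem with Sobolev measurement-noise weight `Π1`
and sensing parameter `Π4`. -/
noncomputable def Lhat0 (n : ℕ) (Pi1 Pi4 : ℝ) (k : ℕ) : ℝ :=
  Dlap n k / Pi4 + Real.sqrt ((Dlap n k) ^ 2 / Pi4 ^ 2 - Pi1 * Dlap n k + 1)

theorem Lhat0_two_div_eq_one (n : ℕ) {Pi4 : ℝ} (hPi4 : 0 < Pi4) (k : ℕ) :
    Lhat0 n (2 / Pi4) Pi4 k = 1 := by
  have hrad : Dlap n k ^ 2 / Pi4 ^ 2 - 2 / Pi4 * Dlap n k + 1 = (1 - Dlap n k / Pi4) ^ 2 := by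
    field_simp
    ring
  have hbase : 0 ≤ 1 - Dlap n k / Pi4 := by
    have := div_nonpos_of_nonpos_of_nonneg (Dlap_nonpos n k) hPi4.le
    linarith
  rw [Lhat0, hrad, Real.sqrt_sq hbase]
  ring

theorem kf_gain_decentralized_general (n : ℕ) (Pi1 Pi4 : ℝ)
    (hPi4 : 0 < Pi4) (h : Pi1 = 2 / Pi4) :
    ∀ k : ℕ, k < n →
      Lhat0 n Pi1 Pi4 k = 1 ∧
      ![Real.sqrt (2 * Lhat0 n Pi1 Pi4 k / Pi4), Lhat0 n Pi1 Pi4 k] =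
        ![Real.sqrt (2 / Pi4), 1] := by
  intro k _
  subst h
  have hL := Lhat0_two_div_eq_one n hPi4 k
  refine ⟨hL, ?_⟩
  rw [hL, mul_one]

/-- When `Π1 = 2/Π4`, the Fourier-domain Kalman filter gain is constant across
all spatial frequencies: `L̂0(k) = 1` and the full gain
`[√(2·L̂0(k)/Π4), L̂0(k)]ᵀ` equals `[√(2/Π4), 1]ᵀ` for every
`k ∈ {0,…,n−1}`, i.e. the Kalman filter is completely decentralized. -/
theorem kf_gain_decentralized (n : ℕ) (hn : 1 ≤ n) (Pi1 Pi4 : ℝ)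
    (hPi1 : 0 ≤ Pi1) (hPi4 : 0 < Pi4) (h : Pi1 = 2 / Pi4) :
    ∀ k : ℕ, k < n →
      Lhat0 n Pi1 Pi4 k = 1 ∧
      ![Real.sqrt (2 * Lhat0 n Pi1 Pi4 k / Pi4), Lhat0 n Pi1 Pi4 k] =
        ![Real.sqrt (2 / Pi4), 1] :=
  kf_gain_decentralized_general n Pi1 Pi4 hPi4 h
end

section
/- Let n ≥ 2 and Π3 > 0, and take Π1 = 0. Then the Fourier-domain LQR gain K̂0(k) := D_k + √(D_k² + Π3²) is not constant in k: K̂0(0) = Π3, and for every k ∈ {1,…,n−1} one has K̂0(k) < Π3. In particular, complete decentralization of the LQR gain is never optimal when the state cost contains no potential-energy (Sobolev) term. -/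
/-- The scalar Fourier-domain LQR gain at spatial frequency `k` for the
discretized wave equation with ℓ₂ state cost (`Π1 = 0`). -/
noncomputable def Khat0L2 (n : ℕ) (Pi3 : ℝ) (k : ℕ) : ℝ :=
  Dlap n k + Real.sqrt ((Dlap n k) ^ 2 + Pi3 ^ 2)

theorem add_sqrt_sq_add_sq_lt {d c : ℝ} (hd : d < 0) (hc : 0 < c) :
    d + √(d ^ 2 + c ^ 2) < c := by
  -- `(c - d)² - (d² + c²) = -2cd > 0`
  have hsqrt : √(d ^ 2 + c ^ 2) < c - d :=
    (Real.sqrt_lt' (by linarith)).2 (by nlinarith)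
  linarith

theorem Dlap_zero (n : ℕ) : Dlap n 0 = 0 := by
  simp [Dlap]

theorem Dlap_neg {n k : ℕ} (hk : 0 < k) (hkn : k < n) : Dlap n k < 0 := by
  have hn : (0 : ℝ) < n := by exact_mod_cast hk.trans hkn
  have hangle_pos : 0 < Real.pi * k / n := by positivity
  have hangle_lt : Real.pi * k / n < Real.pi := by
    rw [div_lt_iff₀ hn]
    exact mul_lt_mul_of_pos_left (by exact_mod_cast hkn) Real.pi_pos
  have hsin := Real.sin_pos_of_pos_of_lt_pi hangle_pos hangle_lt
  unfold Dlap
  linarith [pow_pos hsin 2]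

theorem Khat0L2_zero (n : ℕ) {Pi3 : ℝ} (hPi3 : 0 ≤ Pi3) : Khat0L2 n Pi3 0 = Pi3 := by
  simp [Khat0L2, Dlap_zero, Real.sqrt_sq hPi3]

theorem Khat0L2_lt {n k : ℕ} {Pi3 : ℝ} (hPi3 : 0 < Pi3) (hk : 0 < k) (hkn : k < n) :
    Khat0L2 n Pi3 k < Pi3 :=
  add_sqrt_sq_add_sq_lt (Dlap_neg hk hkn) hPi3

theorem lqr_gain_not_decentralizable_l2_general (n : ℕ) (Pi3 : ℝ)
    (hPi3 : 0 < Pi3) :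
    Khat0L2 n Pi3 0 = Pi3 ∧
      ∀ k : ℕ, 1 ≤ k → k ≤ n - 1 → Khat0L2 n Pi3 k < Pi3 :=
  ⟨Khat0L2_zero n hPi3.le, fun _ hk hkn => Khat0L2_lt hPi3 hk (by omega)⟩

/-- With no potential-energy (Sobolev) term in the state cost (`Π1 = 0`), the
Fourier-domain LQR gain is not constant: `K̂0(0) = Π3` while `K̂0(k) < Π3` for
every `k ∈ {1,…,n−1}`, so complete decentralization is never optimal. -/
theorem lqr_gain_not_decentralizable_l2 (n : ℕ) (hn : 2 ≤ n) (Pi3 : ℝ)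
    (hPi3 : 0 < Pi3) :
    Khat0L2 n Pi3 0 = Pi3 ∧
      ∀ k : ℕ, 1 ≤ k → k ≤ n - 1 → Khat0L2 n Pi3 k < Pi3 :=
  lqr_gain_not_decentralizable_l2_general n Pi3 hPi3
end

section
/- Let n ≥ 2 and Π4 > 0, and take Π1 = 0. Then the Fourier-domain Kalman filter gain L̂0(k) := D_k/Π4 + √(D_k²/Π4² + 1) is not constant in k: L̂0(0) = 1, and for every k ∈ {1,…,n−1} one has L̂0(k) < 1. In particular, complete decentralization of the Kalman filter gain is never optimal when the measurement-noise cost contains no Sobolev term. -/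
/-- The scalar Fourier-domain Kalman filter gain at spatial frequency `k` for
the discretized wave equation with ℓ₂ noise cost (`Π1 = 0`). -/
noncomputable def Lhat0L2 (n : ℕ) (Pi4 : ℝ) (k : ℕ) : ℝ :=
  Dlap n k / Pi4 + Real.sqrt ((Dlap n k) ^ 2 / Pi4 ^ 2 + 1)

theorem add_sqrt_sq_add_one_lt_one {x : ℝ} (hx : x < 0) : x + √(x ^ 2 + 1) < 1 := by
  have hsqrt : √(x ^ 2 + 1) < 1 - x := (Real.sqrt_lt' (by linarith)).2 (by nlinarith)
  linarith

theorem Lhat0L2_eq (n : ℕ) (Pi4 : ℝ) (k : ℕ) :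
    Lhat0L2 n Pi4 k = Dlap n k / Pi4 + √((Dlap n k / Pi4) ^ 2 + 1) := by
  rw [Lhat0L2, div_pow]

theorem Lhat0L2_zero (n : ℕ) (Pi4 : ℝ) : Lhat0L2 n Pi4 0 = 1 := by
  simp [Lhat0L2_eq, Dlap_zero]

theorem Lhat0L2_lt_one {n k : ℕ} {Pi4 : ℝ} (hPi4 : 0 < Pi4) (hk : 0 < k) (hkn : k < n) :
    Lhat0L2 n Pi4 k < 1 := by
  rw [Lhat0L2_eq]
  exact add_sqrt_sq_add_one_lt_one (div_neg_of_neg_of_pos (Dlap_neg hk hkn) hPi4)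

theorem kf_gain_not_decentralizable_l2_general (n : ℕ) (Pi4 : ℝ)
    (hPi4 : 0 < Pi4) :
    Lhat0L2 n Pi4 0 = 1 ∧
      ∀ k : ℕ, 1 ≤ k → k ≤ n - 1 → Lhat0L2 n Pi4 k < 1 :=
  ⟨Lhat0L2_zero n Pi4, fun _ hk hkn => Lhat0L2_lt_one hPi4 hk (by omega)⟩

/-- With no Sobolev term in the measurement-noise cost (`Π1 = 0`), the
Fourier-domain Kalman filter gain is not constant: `L̂0(0) = 1` while
`L̂0(k) < 1` for every `k ∈ {1,…,n−1}`, so complete decentralization is never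
optimal. -/
theorem kf_gain_not_decentralizable_l2 (n : ℕ) (hn : 2 ≤ n) (Pi4 : ℝ)
    (hPi4 : 0 < Pi4) :
    Lhat0L2 n Pi4 0 = 1 ∧
      ∀ k : ℕ, 1 ≤ k → k ≤ n - 1 → Lhat0L2 n Pi4 k < 1 :=
  kf_gain_not_decentralizable_l2_general n Pi4 hPi4
end
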